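/- Let F be a field, let S be a finite index set, and for each i ∈ S let p_i, q_i ∈ ℕ² with p_i ≤ q_i and p_i ≠ q_i. Write p_i = (b_i, b'_i) and q_i − p_i = (a_i, c_i). If a biparameter persistence module M : ℕ² → Vect_F is isomorphic to the finite direct sum of hook interval modules ⊕_{i ∈ S} H_{p_i, q_i}, then M is isomorphic to the persistence module associated with the γ-product, namely the functor whose value at (m,n) is ⊕_{i ∈ S} (the F-span of the class of x^{m−b_i} y^{n−b'_i} in F[x,y]/(x^{a_i} y^{c_i}), taken to be zero when (m,n) is not ≥ p_i componentwise) with transition maps induced componentwise by multiplication by monomials. In particular, every hook-decomposable biparameter persistence module with finitely many summands and finite hooks is isomorphic to a γ-product. -/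

import Mathlib

open MvPolynomial CategoryTheory DirectSum

attribute [local instance 2000] Preorder.smallCategory

set_option synthInstance.maxHeartbeats 1000000
set_option maxHeartbeats 1000000

noncomputable section

/-! ### The shifted quotient modules `F[x,y]/(x^a y^c)(−p)` and their persistence modules -/

/-- The ideal of `F[x,y]` generated by the single monomial `x^a * y^c`. -/
def monomialIdeal (F : Type) [Field F] (a c : ℕ) :
    Ideal (MvPolynomial (Fin 2) F) :=
  Ideal.span {(X 0 : MvPolynomial (Fin 2) F) ^ a * (X 1 : MvPolynomial (Fin 2) F) ^ c}

/-- The class of the monomial `x^m y^n` in the quotient `F[x,y]/(x^a y^c)`. -/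
def monomialClass (F : Type) [Field F] (a c m n : ℕ) :
    MvPolynomial (Fin 2) F ⧸ monomialIdeal F a c :=
  Ideal.Quotient.mk (monomialIdeal F a c)
    ((X 0 : MvPolynomial (Fin 2) F) ^ m * (X 1 : MvPolynomial (Fin 2) F) ^ n)

/-- The bidegree-`r` piece of the shifted module `F[x,y]/(x^a y^c)(−p)`:
the `F`-span of the class of `x^{r.1−p.1} y^{r.2−p.2}` when `r ≥ p`, zero otherwise. -/
def quotientPiece (F : Type) [Field F] (a c : ℕ) (p r : ℕ × ℕ) :
    Submodule F (MvPolynomial (Fin 2) F ⧸ monomialIdeal F a c) :=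
  if p ≤ r then Submodule.span F {monomialClass F a c (r.1 - p.1) (r.2 - p.2)} else ⊥

/-- Multiplication by `x^s y^t` as an `F`-linear endomorphism of `F[x,y]/(x^a y^c)`. -/
def mulMonomial (F : Type) [Field F] (a c s t : ℕ) :
    (MvPolynomial (Fin 2) F ⧸ monomialIdeal F a c) →ₗ[F]
      (MvPolynomial (Fin 2) F ⧸ monomialIdeal F a c) :=
  (LinearMap.lsmul (MvPolynomial (Fin 2) F) (MvPolynomial (Fin 2) F ⧸ monomialIdeal F a c)
      ((X 0 : MvPolynomial (Fin 2) F) ^ s * (X 1 : MvPolynomial (Fin 2) F) ^ t)).restrictScalars F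

lemma mulMonomial_class (F : Type) [Field F] (a c s t m n : ℕ) :
    mulMonomial F a c s t (monomialClass F a c m n) = monomialClass F a c (s + m) (t + n) := by
  show Ideal.Quotient.mk (monomialIdeal F a c)
      ((((X 0 : MvPolynomial (Fin 2) F) ^ s * (X 1 : MvPolynomial (Fin 2) F) ^ t)) *
        ((X 0 : MvPolynomial (Fin 2) F) ^ m * (X 1 : MvPolynomial (Fin 2) F) ^ n)) = _
  rw [mul_mul_mul_comm, ← pow_add, ← pow_add]
  rfl

lemma quotientPiece_mapsTo (F : Type) [Field F] (a c : ℕ) (p : ℕ × ℕ) {r r' : ℕ × ℕ}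
    (h : r ≤ r') :
    ∀ x ∈ quotientPiece F a c p r,
      mulMonomial F a c (r'.1 - r.1) (r'.2 - r.2) x ∈ quotientPiece F a c p r' := by
  intro x hx
  by_cases hp : p ≤ r
  · have hp' : p ≤ r' := hp.trans h
    rw [quotientPiece, if_pos hp] at hx
    rw [quotientPiece, if_pos hp']
    obtain ⟨k, rfl⟩ := Submodule.mem_span_singleton.mp hx
    rw [map_smul, mulMonomial_class, Nat.sub_add_sub_cancel h.1 hp.1,
      Nat.sub_add_sub_cancel h.2 hp.2]
    exact Submodule.smul_mem _ k (Submodule.mem_span_singleton_self _)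
  · rw [quotientPiece, if_neg hp, Submodule.mem_bot] at hx
    subst hx
    simp only [map_zero]
    exact Submodule.zero_mem _

/-- Transition map of the persistence module associated with the shifted quotient. -/
def quotientPieceMap (F : Type) [Field F] (a c : ℕ) (p : ℕ × ℕ) {r r' : ℕ × ℕ} (h : r ≤ r') :
    quotientPiece F a c p r →ₗ[F] quotientPiece F a c p r' :=
  (mulMonomial F a c (r'.1 - r.1) (r'.2 - r.2)).restrict (quotientPiece_mapsTo F a c p h)

lemma quotientPieceMap_refl (F : Type) [Field F] (a c : ℕ) (p r : ℕ × ℕ) :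
    quotientPieceMap F a c p (le_refl r) = LinearMap.id := by
  ext x
  show mulMonomial F a c (r.1 - r.1) (r.2 - r.2) (x : _) = (x : _)
  simp [mulMonomial]

lemma quotientPieceMap_trans (F : Type) [Field F] (a c : ℕ) (p : ℕ × ℕ) {r r' r'' : ℕ × ℕ}
    (h1 : r ≤ r') (h2 : r' ≤ r'') :
    (quotientPieceMap F a c p h2).comp (quotientPieceMap F a c p h1) =
      quotientPieceMap F a c p (h1.trans h2) := by
  ext x
  show mulMonomial F a c _ _ (mulMonomial F a c _ _ (x : _)) = mulMonomial F a c _ _ (x : _)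
  simp only [mulMonomial, LinearMap.coe_restrictScalars, LinearMap.lsmul_apply, smul_smul]
  congr 1
  rw [mul_mul_mul_comm, ← pow_add, ← pow_add, Nat.sub_add_sub_cancel h2.1 h1.1,
    Nat.sub_add_sub_cancel h2.2 h1.2]

/-- The persistence module (functor `ℕ² ⥤ Vect_F`) associated with the shifted quotient
`F[x,y]/(x^a y^c)(−p)`: its value at `r` is the `F`-span of the class of the shifted
monomial `x^{r.1−p.1} y^{r.2−p.2}` (zero if `¬ r ≥ p`), and its transition maps are
induced by multiplication by monomials. -/
def quotientPieceFunctor (F : Type) [Field F] (a c : ℕ) (p : ℕ × ℕ) :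
    (ℕ × ℕ) ⥤ ModuleCat F where
  obj r := ModuleCat.of F (quotientPiece F a c p r)
  map {r r'} h := ModuleCat.ofHom (quotientPieceMap F a c p (leOfHom h))
  map_id r := (congrArg ModuleCat.ofHom (quotientPieceMap_refl F a c p r)).trans ModuleCat.ofHom_id
  map_comp {r r' r''} h1 h2 :=
    (congrArg ModuleCat.ofHom
      (quotientPieceMap_trans F a c p (leOfHom h1) (leOfHom h2)).symm).trans
      (ModuleCat.ofHom_comp _ _)

/-- The persistence module associated with the γ-product with data `(aᵢ, cᵢ, pᵢ)`:
its value at `r` is `⊕ᵢ` (span of the class of the shifted monomial in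
`F[x,y]/(x^{aᵢ} y^{cᵢ})`, zero when `¬ r ≥ pᵢ`), with transition maps induced
componentwise by multiplication by monomials. -/

def gammaSumMap (F : Type) [Field F] (S : Type) (a c : S → ℕ) (p : S → ℕ × ℕ)
    {r r' : ℕ × ℕ} (h : r ≤ r') :
    (⨁ (i : S), ↥(quotientPiece F (a i) (c i) (p i) r)) →ₗ[F]
      (⨁ (i : S), ↥(quotientPiece F (a i) (c i) (p i) r')) :=
  DFinsupp.mapRange.linearMap (fun i => quotientPieceMap F (a i) (c i) (p i) h)

lemma gammaSumMap_refl (F : Type) [Field F] (S : Type) (a c : S → ℕ) (p : S → ℕ × ℕ)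
    (r : ℕ × ℕ) : gammaSumMap F S a c p (le_refl r) = LinearMap.id := by
  have h1 : (fun i => quotientPieceMap F (a i) (c i) (p i) (le_refl r)) =
      (fun i : S => LinearMap.id) :=
    funext fun i => quotientPieceMap_refl F (a i) (c i) (p i) r
  rw [gammaSumMap, h1, DFinsupp.mapRange.linearMap_id]

lemma gammaSumMap_trans (F : Type) [Field F] (S : Type) (a c : S → ℕ) (p : S → ℕ × ℕ)
    {r r' r'' : ℕ × ℕ} (h1 : r ≤ r') (h2 : r' ≤ r'') :
    (gammaSumMap F S a c p h2).comp (gammaSumMap F S a c p h1) =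
      gammaSumMap F S a c p (h1.trans h2) := by
  have he : (fun i => quotientPieceMap F (a i) (c i) (p i) (h1.trans h2)) =
      (fun i => (quotientPieceMap F (a i) (c i) (p i) h2).comp
        (quotientPieceMap F (a i) (c i) (p i) h1)) :=
    funext fun i => (quotientPieceMap_trans F (a i) (c i) (p i) h1 h2).symm
  rw [gammaSumMap, gammaSumMap, gammaSumMap, he, DFinsupp.mapRange.linearMap_comp]

instance quotientPiece.instAddCommGroup (F : Type) [Field F] (a c : ℕ) (p r : ℕ × ℕ) :
    AddCommGroup (quotientPiece F a c p r) :=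
  Submodule.addCommGroup _

def gammaProductFunctor (F : Type) [Field F] (S : Type) (a c : S → ℕ) (p : S → ℕ × ℕ) :
    (ℕ × ℕ) ⥤ ModuleCat F where
  obj r := ModuleCat.of F (⨁ (i : S), ↥(quotientPiece F (a i) (c i) (p i) r))
  map {r r'} h := ModuleCat.ofHom (gammaSumMap F S a c p (leOfHom h))
  map_id r := (congrArg ModuleCat.ofHom (gammaSumMap_refl F S a c p r)).trans ModuleCat.ofHom_id
  map_comp {r r' r''} h1 h2 :=
    (congrArg ModuleCat.ofHom
      (gammaSumMap_trans F S a c p (leOfHom h1) (leOfHom h2)).symm).trans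
      (ModuleCat.ofHom_comp _ _)


/-! ### Interval persistence modules (hook modules and upper-set modules) -/

/-- The value of the interval module of `region` at `r`, realised as a submodule of `F`:
all of `F` for `r ∈ region`, and `0` otherwise. -/
def intervalPiece (F : Type) [Field F] (region : Set (ℕ × ℕ)) (r : ℕ × ℕ) :
    Submodule F F :=
  letI := Classical.propDecidable (r ∈ region)
  if r ∈ region then ⊤ else ⊥

/-- The underlying endomorphism of `F` for a transition map into position `r'`:
the identity if `r' ∈ region` and zero otherwise. -/
def intervalMapAux (F : Type) [Field F] (region : Set (ℕ × ℕ)) (r' : ℕ × ℕ) :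
    F →ₗ[F] F :=
  letI := Classical.propDecidable (r' ∈ region)
  if r' ∈ region then LinearMap.id else 0

lemma intervalMap_mapsTo (F : Type) [Field F] (region : Set (ℕ × ℕ)) (r r' : ℕ × ℕ) :
    ∀ x ∈ intervalPiece F region r, intervalMapAux F region r' x ∈ intervalPiece F region r' := by
  classical
  intro x hx
  by_cases h : r' ∈ region
  · simp [intervalPiece, h]
  · rw [intervalMapAux, if_neg h]
    exact Submodule.zero_mem _

/-- Transition map of the interval module: the identity between points of the region,
and zero otherwise. -/
def intervalMap (F : Type) [Field F] (region : Set (ℕ × ℕ)) (r r' : ℕ × ℕ) :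
    intervalPiece F region r →ₗ[F] intervalPiece F region r' :=
  (intervalMapAux F region r').restrict (intervalMap_mapsTo F region r r')

lemma intervalMap_refl (F : Type) [Field F] (region : Set (ℕ × ℕ)) (r : ℕ × ℕ) :
    intervalMap F region r r = LinearMap.id := by
  classical
  ext x
  show intervalMapAux F region r x.1 = x.1
  by_cases h : r ∈ region
  · simp [intervalMapAux, h]
  · have hx : x.1 = 0 := by
      have hb : intervalPiece F region r = ⊥ := by
        unfold intervalPiece
        exact if_neg h
      have key : ∀ y : F, y ∈ intervalPiece F region r → y = 0 := by
        intro y hy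
        rw [hb, Submodule.mem_bot] at hy
        exact hy
      exact key x.1 x.2
    simp [intervalMapAux, h, hx]

lemma intervalMap_trans (F : Type) [Field F] (region : Set (ℕ × ℕ))
    (hconv : ∀ {r r' r'' : ℕ × ℕ}, r ≤ r' → r' ≤ r'' →
      r ∈ region → r'' ∈ region → r' ∈ region)
    {r r' r'' : ℕ × ℕ} (h1 : r ≤ r') (h2 : r' ≤ r'') :
    (intervalMap F region r' r'').comp (intervalMap F region r r') =
      intervalMap F region r r'' := by
  classical
  ext x
  show intervalMapAux F region r'' (intervalMapAux F region r' x.1) =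
    intervalMapAux F region r'' x.1
  by_cases h'' : r'' ∈ region
  · by_cases h : r ∈ region
    · have h' : r' ∈ region := hconv h1 h2 h h''
      simp [intervalMapAux, h', h'']
    · have hx : x.1 = 0 := by
        have hb : intervalPiece F region r = ⊥ := by
          unfold intervalPiece
          exact if_neg h
        have key : ∀ y : F, y ∈ intervalPiece F region r → y = 0 := by
          intro y hy
          rw [hb, Submodule.mem_bot] at hy
          exact hy
        exact key x.1 x.2
      simp [intervalMapAux, hx]
  · simp [intervalMapAux, h'']

/-- The interval persistence module of a convex region of `ℕ²`: value `F` on the region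
(zero elsewhere), identity transition maps within the region, zero maps otherwise. -/
def intervalFunctor (F : Type) [Field F] (region : Set (ℕ × ℕ))
    (hconv : ∀ {r r' r'' : ℕ × ℕ}, r ≤ r' → r' ≤ r'' →
      r ∈ region → r'' ∈ region → r' ∈ region) :
    (ℕ × ℕ) ⥤ ModuleCat F where
  obj r := ModuleCat.of F (intervalPiece F region r)
  map {r r'} _ := ModuleCat.ofHom (intervalMap F region r r')
  map_id r := (congrArg ModuleCat.ofHom (intervalMap_refl F region r)).trans ModuleCat.ofHom_id
  map_comp {r r' r''} h1 h2 :=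
    (congrArg ModuleCat.ofHom
      (intervalMap_trans F region hconv (leOfHom h1) (leOfHom h2)).symm).trans
      (ModuleCat.ofHom_comp _ _)


/-- The hook region `H(p,q) = {r : r ≥ p, ¬ r ≥ q}`. -/
def hookRegion (p q : ℕ × ℕ) : Set (ℕ × ℕ) := {r | p ≤ r ∧ ¬ q ≤ r}

lemma hookRegion_convex {p q r r' r'' : ℕ × ℕ} (h1 : r ≤ r') (h2 : r' ≤ r'')
    (hr : r ∈ hookRegion p q) (hr'' : r'' ∈ hookRegion p q) : r' ∈ hookRegion p q :=
  ⟨hr.1.trans h1, fun hq => hr''.2 (hq.trans h2)⟩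

/-- The hook interval module `H_{p,q}`. -/
def hookFunctor (F : Type) [Field F] (p q : ℕ × ℕ) : (ℕ × ℕ) ⥤ ModuleCat F :=
  intervalFunctor F (hookRegion p q) (fun h1 h2 hr hr'' => hookRegion_convex h1 h2 hr hr'')


def hookSumMap (F : Type) [Field F] (S : Type) (p q : S → ℕ × ℕ) (r r' : ℕ × ℕ) :
    (⨁ (i : S), ↥(intervalPiece F (hookRegion (p i) (q i)) r)) →ₗ[F]
      (⨁ (i : S), ↥(intervalPiece F (hookRegion (p i) (q i)) r')) :=
  DFinsupp.mapRange.linearMap (fun i => intervalMap F (hookRegion (p i) (q i)) r r')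

lemma hookSumMap_refl (F : Type) [Field F] (S : Type) (p q : S → ℕ × ℕ) (r : ℕ × ℕ) :
    hookSumMap F S p q r r = LinearMap.id := by
  have h1 : (fun i => intervalMap F (hookRegion (p i) (q i)) r r) =
      (fun i : S => LinearMap.id) :=
    funext fun i => intervalMap_refl F (hookRegion (p i) (q i)) r
  rw [hookSumMap, h1, DFinsupp.mapRange.linearMap_id]

lemma hookSumMap_trans (F : Type) [Field F] (S : Type) (p q : S → ℕ × ℕ)
    {r r' r'' : ℕ × ℕ} (h1 : r ≤ r') (h2 : r' ≤ r'') :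
    (hookSumMap F S p q r' r'').comp (hookSumMap F S p q r r') = hookSumMap F S p q r r'' := by
  have he : (fun i => intervalMap F (hookRegion (p i) (q i)) r r'') =
      (fun i => (intervalMap F (hookRegion (p i) (q i)) r' r'').comp
        (intervalMap F (hookRegion (p i) (q i)) r r')) :=
    funext fun i =>
      (intervalMap_trans F (hookRegion (p i) (q i))
        (fun a b ha hb => hookRegion_convex a b ha hb) h1 h2).symm
  rw [hookSumMap, hookSumMap, hookSumMap, he, DFinsupp.mapRange.linearMap_comp]

/-- The direct sum `⊕ᵢ H_{pᵢ,qᵢ}` of hook interval modules, as a persistence module. -/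
def hookSumFunctor (F : Type) [Field F] (S : Type) (p q : S → ℕ × ℕ) :
    (ℕ × ℕ) ⥤ ModuleCat F where
  obj r := ModuleCat.of F (⨁ (i : S), ↥(intervalPiece F (hookRegion (p i) (q i)) r))
  map {r r'} _ := ModuleCat.ofHom (hookSumMap F S p q r r')
  map_id r := (congrArg ModuleCat.ofHom (hookSumMap_refl F S p q r)).trans ModuleCat.ofHom_id
  map_comp {r r' r''} h1 h2 :=
    (congrArg ModuleCat.ofHom
      (hookSumMap_trans F S p q (leOfHom h1) (leOfHom h2)).symm).trans
      (ModuleCat.ofHom_comp _ _)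


/-! At a bidegree `r ≥ p` the class of `x^{r-p}` in `F[x,y]/(x^{q₁-p₁} y^{q₂-p₂})` vanishes
exactly when `r ≥ q`, so both `H_{p,q}(r)` and the `r`-th piece of the shifted quotient are
one-dimensional on the hook `H(p,q)` and zero off it. Sending `1` to the class of `x^{r-p}` is
therefore an isomorphism at every `r`, and it commutes with the transition maps because
`x^{r'-r} · x^{r-p} = x^{r'-p}`. Summing over `i` gives the isomorphism of persistence modules. -/

lemma monomialClass_eq_zero_iff (F : Type) [Field F] {a c m n : ℕ} :
    monomialClass F a c m n = 0 ↔ a ≤ m ∧ c ≤ n := by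
  rw [monomialClass, Ideal.Quotient.eq_zero_iff_mem, monomialIdeal, Ideal.mem_span_singleton,
    X_pow_eq_monomial, X_pow_eq_monomial, monomial_mul, X_pow_eq_monomial, X_pow_eq_monomial,
    monomial_mul, monomial_dvd_monomial]
  simp [Finsupp.le_def, Fin.forall_fin_two]

def shiftClass (F : Type) [Field F] (a c : ℕ) (p r : ℕ × ℕ) :
    MvPolynomial (Fin 2) F ⧸ monomialIdeal F a c :=
  if p ≤ r then monomialClass F a c (r.1 - p.1) (r.2 - p.2) else 0

lemma quotientPiece_eq_span_shiftClass (F : Type) [Field F] (a c : ℕ) (p r : ℕ × ℕ) :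
    quotientPiece F a c p r = Submodule.span F {shiftClass F a c p r} := by
  unfold quotientPiece shiftClass
  split_ifs
  · rfl
  · rw [Submodule.span_zero_singleton]

lemma mem_quotientPiece_iff (F : Type) [Field F] {a c : ℕ} {p r : ℕ × ℕ}
    {v : MvPolynomial (Fin 2) F ⧸ monomialIdeal F a c} :
    v ∈ quotientPiece F a c p r ↔ ∃ t : F, t • shiftClass F a c p r = v := by
  rw [quotientPiece_eq_span_shiftClass, Submodule.mem_span_singleton]

lemma shiftClass_mem_quotientPiece (F : Type) [Field F] (a c : ℕ) (p r : ℕ × ℕ) :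
    shiftClass F a c p r ∈ quotientPiece F a c p r :=
  mem_quotientPiece_iff F |>.mpr ⟨1, one_smul F _⟩

lemma shiftClass_eq_zero_iff (F : Type) [Field F] (p q r : ℕ × ℕ) :
    shiftClass F (q.1 - p.1) (q.2 - p.2) p r = 0 ↔ r ∉ hookRegion p q := by
  unfold shiftClass hookRegion
  split_ifs with hp
  · rw [monomialClass_eq_zero_iff, tsub_le_tsub_iff_right hp.1, tsub_le_tsub_iff_right hp.2]
    simp [Prod.le_def, hp.1, hp.2]
  · simp [hp]

lemma mulMonomial_shiftClass (F : Type) [Field F] (a c : ℕ) {p r r' : ℕ × ℕ}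
    (hp : p ≤ r) (h : r ≤ r') :
    mulMonomial F a c (r'.1 - r.1) (r'.2 - r.2) (shiftClass F a c p r) =
      shiftClass F a c p r' := by
  rw [shiftClass, if_pos hp, shiftClass, if_pos (hp.trans h), mulMonomial_class,
    Nat.sub_add_sub_cancel h.1 hp.1, Nat.sub_add_sub_cancel h.2 hp.2]

lemma eq_zero_of_mem_intervalPiece (F : Type) [Field F] {region : Set (ℕ × ℕ)} {r : ℕ × ℕ}
    (hr : r ∉ region) {x : F} (hx : x ∈ intervalPiece F region r) : x = 0 := by
  rwa [intervalPiece, if_neg hr, Submodule.mem_bot] at hx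

lemma intervalMapAux_of_mem (F : Type) [Field F] {region : Set (ℕ × ℕ)} {r : ℕ × ℕ}
    (hr : r ∈ region) (x : F) : intervalMapAux F region r x = x := by
  rw [intervalMapAux, if_pos hr, LinearMap.id_apply]

def hookToGamma (F : Type) [Field F] (p q r : ℕ × ℕ) :
    intervalPiece F (hookRegion p q) r →ₗ[F] quotientPiece F (q.1 - p.1) (q.2 - p.2) p r :=
  LinearMap.codRestrict _
    ((LinearMap.toSpanSingleton F _ (shiftClass F _ _ p r)).comp (Submodule.subtype _))
    (fun _ => Submodule.smul_mem _ _ (shiftClass_mem_quotientPiece F _ _ p r))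

lemma hookToGamma_bijective (F : Type) [Field F] (p q r : ℕ × ℕ) :
    Function.Bijective (hookToGamma F p q r) := by
  by_cases hr : r ∈ hookRegion p q
  · have hv : shiftClass F (q.1 - p.1) (q.2 - p.2) p r ≠ 0 :=
      fun h => (shiftClass_eq_zero_iff F p q r).mp h hr
    refine ⟨fun x y hxy => Subtype.ext (smul_left_injective F hv (congrArg Subtype.val hxy)),
      fun y => ?_⟩
    obtain ⟨t, ht⟩ := (mem_quotientPiece_iff F).mp y.2
    exact ⟨⟨t, by simp [intervalPiece, hr]⟩, Subtype.ext ht⟩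
  · refine ⟨fun x y _ => Subtype.ext ?_, fun y => ⟨0, Subtype.ext ?_⟩⟩
    · rw [eq_zero_of_mem_intervalPiece F hr x.2, eq_zero_of_mem_intervalPiece F hr y.2]
    · obtain ⟨t, ht⟩ := (mem_quotientPiece_iff F).mp y.2
      rw [(shiftClass_eq_zero_iff F p q r).mpr hr, smul_zero] at ht
      simp [← ht]

def hookEquivGamma (F : Type) [Field F] (p q r : ℕ × ℕ) :
    intervalPiece F (hookRegion p q) r ≃ₗ[F] quotientPiece F (q.1 - p.1) (q.2 - p.2) p r :=
  LinearEquiv.ofBijective _ (hookToGamma_bijective F p q r)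

lemma hookToGamma_naturality (F : Type) [Field F] (p q : ℕ × ℕ) {r r' : ℕ × ℕ} (h : r ≤ r') :
    (quotientPieceMap F (q.1 - p.1) (q.2 - p.2) p h).comp (hookToGamma F p q r) =
      (hookToGamma F p q r').comp (intervalMap F (hookRegion p q) r r') := by
  ext x
  change mulMonomial F _ _ (r'.1 - r.1) (r'.2 - r.2) ((x : F) • shiftClass F _ _ p r) =
    intervalMapAux F (hookRegion p q) r' (x : F) • shiftClass F _ _ p r'
  by_cases hr : r ∈ hookRegion p q
  · rw [map_smul, mulMonomial_shiftClass F _ _ hr.1 h]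
    by_cases hr' : r' ∈ hookRegion p q
    · rw [intervalMapAux_of_mem F hr']
    · rw [(shiftClass_eq_zero_iff F p q r').mpr hr', smul_zero, smul_zero]
  · rw [eq_zero_of_mem_intervalPiece F hr x.2, zero_smul, map_zero, map_zero, zero_smul]

def hookSumIsoGammaProduct (F : Type) [Field F] (S : Type) (p q : S → ℕ × ℕ) :
    hookSumFunctor F S p q ≅
      gammaProductFunctor F S (fun i => (q i).1 - (p i).1) (fun i => (q i).2 - (p i).2) p :=
  NatIso.ofComponents
    (fun r => (DFinsupp.mapRange.linearEquiv fun i => hookEquivGamma F (p i) (q i) r).toModuleIso)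
    (fun {r r'} h => ModuleCat.hom_ext <| by
      change (DFinsupp.mapRange.linearMap fun i => hookToGamma F (p i) (q i) r').comp
          (DFinsupp.mapRange.linearMap _) =
        (DFinsupp.mapRange.linearMap _).comp
          (DFinsupp.mapRange.linearMap fun i => hookToGamma F (p i) (q i) r)
      simp only [← DFinsupp.mapRange.linearMap_comp, hookToGamma_naturality F _ _ (leOfHom h)])

theorem hookDecomposable_iso_gammaProduct_general (F : Type) [Field F] (S : Type)
    (p q : S → ℕ × ℕ)
    (M : (ℕ × ℕ) ⥤ ModuleCat F)
    (hM : Nonempty (M ≅ hookSumFunctor F S p q)) :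
    Nonempty (M ≅ gammaProductFunctor F S
      (fun i => (q i).1 - (p i).1) (fun i => (q i).2 - (p i).2) p) :=
  hM.map (· ≪≫ hookSumIsoGammaProduct F S p q)

/-- If a biparameter persistence module `M : ℕ² ⥤ Vect_F` is isomorphic
to a finite direct sum of hook interval modules `⊕_{i ∈ S} H_{pᵢ,qᵢ}` (with `pᵢ ≤ qᵢ`,
`pᵢ ≠ qᵢ`), then `M` is isomorphic to the persistence module associated with the
γ-product with bar-lengths `(aᵢ, cᵢ) = qᵢ − pᵢ` and birth bidegrees `pᵢ`. -/
theorem hookDecomposable_iso_gammaProduct (F : Type) [Field F] (S : Type) [Fintype S]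
    (p q : S → ℕ × ℕ) (hle : ∀ i, p i ≤ q i) (hne : ∀ i, p i ≠ q i)
    (M : (ℕ × ℕ) ⥤ ModuleCat F)
    (hM : Nonempty (M ≅ hookSumFunctor F S p q)) :
    Nonempty (M ≅ gammaProductFunctor F S
      (fun i => (q i).1 - (p i).1) (fun i => (q i).2 - (p i).2) p) :=
  hookDecomposable_iso_gammaProduct_general F S p q M hM

end
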